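/- arXiv:2510.20789 — 4 statements merged into one kernel-verified Lean document; each statement's English description precedes it below -/
import Mathlib

section
/- Let n be a positive integer and let S ⊆ ℂ^n be a linear subspace with dim(S) = r. Then the set of subspaces { S ∩ {v ∈ ℂ^n : v_j = 0 for all j ∈ J} : J ⊆ {1,…,n} } is finite and has cardinality at most ∑_{j=0}^{r} binom(n, j). -/
open Matrix BigOperators Finset ComplexOrder

noncomputable section

/-- The number of nonzero entries of a vector in `ℂ^n`. -/
def suppCard {n : ℕ} (v : Fin n → ℂ) : ℕ :=
  (Finset.univ.filter fun i => v i ≠ 0).card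

/-- A matrix `X` is `k`-incoherent if it can be written as `∑ vᵢ vᵢ*` where each `vᵢ`
has at most `k` nonzero entries. -/
def KIncoherent {n : ℕ} (k : ℕ) (X : Matrix (Fin n) (Fin n) ℂ) : Prop :=
  ∃ (m : ℕ) (v : Fin m → (Fin n → ℂ)),
    (∀ i, suppCard (v i) ≤ k) ∧ X = ∑ i, vecMulVec (v i) (star (v i))

/-- The set `I_k` of positive semidefinite, `k`-incoherent matrices with trace at most `1`. -/
def Ik (n k : ℕ) : Set (Matrix (Fin n) (Fin n) ℂ) :=
  {X | X.PosSemidef ∧ KIncoherent k X ∧ X.trace.re ≤ 1}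

/-- The Gram matrix of a list of vectors in `ℂ^d`. -/
def gramMatrix {n d : ℕ} (ψ : Fin n → (Fin d → ℂ)) : Matrix (Fin n) (Fin n) ℂ :=
  Matrix.of fun i j => star (ψ i) ⬝ᵥ ψ j

/-- A list of states `ψ₁, …, ψₙ` is `k`-learnable if there is a POVM indexed by the
`k`-element subsets of `{1, …, n}` such that `⟨ψᵢ, M_S ψᵢ⟩ = 0` whenever `i ∉ S`. -/
def KLearnable {n d : ℕ} (k : ℕ) (ψ : Fin n → (Fin d → ℂ)) : Prop :=
  ∃ M : {S : Finset (Fin n) // S.card = k} → Matrix (Fin d) (Fin d) ℂ,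
    (∀ S, (M S).PosSemidef) ∧ (∑ S, M S) = 1 ∧
    ∀ (S : {S : Finset (Fin n) // S.card = k}) (i : Fin n),
      i ∉ S.val → star (ψ i) ⬝ᵥ ((M S) *ᵥ ψ i) = 0

/-- The Frobenius norm of a square complex matrix. -/
def frobNorm {m : ℕ} (A : Matrix (Fin m) (Fin m) ℂ) : ℝ :=
  Real.sqrt (∑ i, ∑ j, ‖A i j‖ ^ 2)

/-! Adding one more coordinate condition either leaves the section unchanged or lowers its
dimension, so every section `S ⊓ ⨅ j ∈ J, W j` is already cut out by some `J' ⊆ J` with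
`#J' ≤ dim S`. The sections are therefore indexed by sets of at most `dim S` coordinates. -/

namespace Finset

lemma card_filter_card_le_le_sum_choose {α : Type*} [Fintype α] (r : ℕ) :
    #{s : Finset α | #s ≤ r} ≤ ∑ k ∈ range (r + 1), (Fintype.card α).choose k := by
  classical
  simp_rw [← card_univ, ← card_powersetCard]
  refine (card_le_card fun s hs ↦ mem_biUnion.2 ⟨#s, ?_⟩).trans card_biUnion_le
  exact ⟨mem_range.2 (Nat.lt_succ_of_le (mem_filter.1 hs).2), mem_powersetCard_univ.2 rfl⟩

end Finset

namespace Submodule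

open Module

variable {K V ι : Type*} [DivisionRing K] [AddCommGroup V] [Module K V]

lemma exists_subset_inf_biInf_eq_card_add_finrank_le [DecidableEq ι] (S : Submodule K V)
    [FiniteDimensional K S] (W : ι → Submodule K V) (J : Finset ι) :
    ∃ J' ⊆ J, S ⊓ ⨅ j ∈ J', W j = S ⊓ ⨅ j ∈ J, W j ∧
      #J' + finrank K ↥(S ⊓ ⨅ j ∈ J, W j) ≤ finrank K S := by
  induction J using Finset.induction_on with
  | empty =>
    refine ⟨∅, subset_refl _, rfl, ?_⟩
    rw [Finset.card_empty, zero_add]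
    exact finrank_mono inf_le_left
  | insert a J _ ih =>
    obtain ⟨J', hJ', hsec, hcard⟩ := ih
    have hsec_insert : S ⊓ ⨅ j ∈ insert a J', W j = S ⊓ ⨅ j ∈ insert a J, W j := by
      simp only [Finset.iInf_insert, inf_left_comm S (W a), hsec]
    by_cases hstable : S ⊓ ⨅ j ∈ insert a J', W j = S ⊓ ⨅ j ∈ J', W j
    · refine ⟨J', hJ'.trans (Finset.subset_insert a J), ?_, ?_⟩
      · rw [← hsec_insert, hstable]
      · rwa [← hsec_insert, hstable, hsec]
    · have hlt : S ⊓ ⨅ j ∈ insert a J', W j < S ⊓ ⨅ j ∈ J', W j :=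
        lt_of_le_of_ne (inf_le_inf_left S (biInf_mono fun _ ↦ Finset.mem_insert_of_mem)) hstable
      have hdrop := finrank_lt_finrank_of_lt hlt
      rw [hsec] at hdrop
      refine ⟨insert a J', Finset.insert_subset_insert a hJ', hsec_insert, ?_⟩
      have := Finset.card_insert_le a J'
      rw [← hsec_insert]
      omega

theorem finite_setOf_inf_biInf [Finite ι] (S : Submodule K V) (W : ι → Submodule K V) :
    {T | ∃ J : Finset ι, T = S ⊓ ⨅ j ∈ J, W j}.Finite :=
  (Set.finite_range fun J : Finset ι ↦ S ⊓ ⨅ j ∈ J, W j).subset fun _ ⟨J, hJ⟩ ↦ ⟨J, hJ.symm⟩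

theorem ncard_setOf_inf_biInf_le [Fintype ι] (S : Submodule K V) [FiniteDimensional K S]
    (W : ι → Submodule K V) :
    {T | ∃ J : Finset ι, T = S ⊓ ⨅ j ∈ J, W j}.ncard ≤
      ∑ k ∈ Finset.range (finrank K S + 1), (Fintype.card ι).choose k := by
  classical
  set sec : Finset ι → Submodule K V := fun J ↦ S ⊓ ⨅ j ∈ J, W j
  have hsub : {T | ∃ J : Finset ι, T = sec J} ⊆
      sec '' ↑({J : Finset ι | #J ≤ finrank K S} : Finset (Finset ι)) := by
    rintro _ ⟨J, rfl⟩
    obtain ⟨J', -, hsec, hcard⟩ := exists_subset_inf_biInf_eq_card_add_finrank_le S W J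
    exact ⟨J', Finset.mem_coe.2 (Finset.mem_filter.2 ⟨Finset.mem_univ _, by omega⟩), hsec⟩
  calc _ ≤ (sec '' ↑({J : Finset ι | #J ≤ finrank K S} : Finset (Finset ι))).ncard :=
        Set.ncard_le_ncard hsub ((Finset.finite_toSet _).image _)
    _ ≤ #{J : Finset ι | #J ≤ finrank K S} :=
        (Set.ncard_image_le (Finset.finite_toSet _)).trans (Set.ncard_coe_finset _).le
    _ ≤ _ := Finset.card_filter_card_le_le_sum_choose _

end Submodule

theorem coordinate_sections_finite_general (n r : ℕ)
    (S : Submodule ℂ (Fin n → ℂ)) (hr : Module.finrank ℂ S = r) :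
    {T : Submodule ℂ (Fin n → ℂ) | ∃ J : Finset (Fin n),
        T = S ⊓ Submodule.pi (↑J) (fun _ => (⊥ : Submodule ℂ ℂ))}.Finite ∧
    {T : Submodule ℂ (Fin n → ℂ) | ∃ J : Finset (Fin n),
        T = S ⊓ Submodule.pi (↑J) (fun _ => (⊥ : Submodule ℂ ℂ))}.ncard ≤
      ∑ j ∈ Finset.range (r + 1), n.choose j := by
  have hpi (J : Finset (Fin n)) : Submodule.pi (↑J) (fun _ => (⊥ : Submodule ℂ ℂ)) =
      ⨅ j ∈ J, Submodule.comap (LinearMap.proj j) ⊥ :=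
    Submodule.biInf_comap_proj.symm
  simp only [hpi]
  refine ⟨Submodule.finite_setOf_inf_biInf S _, ?_⟩
  simpa only [hr, Fintype.card_fin] using Submodule.ncard_setOf_inf_biInf_le S
    (fun j : Fin n ↦ Submodule.comap (LinearMap.proj j) ⊥)

/-- For a subspace `S ⊆ ℂ^n` of dimension `r`, the collection of all intersections of `S`
with coordinate subspaces is finite, of cardinality at most `∑_{j=0}^{r} C(n, j)`. -/
theorem coordinate_sections_finite (n r : ℕ) (hn : 0 < n)
    (S : Submodule ℂ (Fin n → ℂ)) (hr : Module.finrank ℂ S = r) :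
    {T : Submodule ℂ (Fin n → ℂ) | ∃ J : Finset (Fin n),
        T = S ⊓ Submodule.pi (↑J) (fun _ => (⊥ : Submodule ℂ ℂ))}.Finite ∧
    {T : Submodule ℂ (Fin n → ℂ) | ∃ J : Finset (Fin n),
        T = S ⊓ Submodule.pi (↑J) (fun _ => (⊥ : Submodule ℂ ℂ))}.ncard ≤
      ∑ j ∈ Finset.range (r + 1), n.choose j :=
  coordinate_sections_finite_general n r S hr
end
end

section
/- The matrix M = [[2, 1, 1, −1], [1, 2, 0, 1], [1, 0, 2, −1], [−1, 1, −1, 2]] ∈ ℂ^{4×4} is positive semidefinite, is 3-incoherent, and is not 2-incoherent; that is, M has factor width exactly 3. -/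
open Matrix BigOperators Finset ComplexOrder

noncomputable section

/-! If `X = ∑ vᵢ vᵢ*` with every `vᵢ` supported on at most `k` coordinates, then entrywise
`∑ₐ,ᵦ |X a b| ≤ ∑ᵢ (∑ₐ |vᵢ a|)² ≤ k ∑ᵢ ‖vᵢ‖² = k · tr X`, the middle step being Cauchy–Schwarz on
the support of `vᵢ`. For `M` the left side is `18` and `tr M = 8`, so `M` is not `2`-incoherent;
an explicit sum of three rank-one terms with three nonzero entries each shows it is
`3`-incoherent, and every incoherent matrix is positive semidefinite. -/

lemma sq_sum_norm_le_suppCard_mul {n : ℕ} (v : Fin n → ℂ) :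
    (∑ i, ‖v i‖) ^ 2 ≤ suppCard v * ∑ i, ‖v i‖ ^ 2 := by
  have hsupp : ∀ f : ℝ → ℝ, f 0 = 0 →
      ∑ i ∈ univ.filter (fun i => v i ≠ 0), f ‖v i‖ = ∑ i, f ‖v i‖ := fun f hf =>
    sum_filter_of_ne fun i _ hi h => hi (by rw [h, norm_zero, hf])
  calc (∑ i, ‖v i‖) ^ 2 = (∑ i ∈ univ.filter (fun i => v i ≠ 0), ‖v i‖) ^ 2 := by
        rw [hsupp (fun x => x) rfl]
    _ ≤ suppCard v * ∑ i ∈ univ.filter (fun i => v i ≠ 0), ‖v i‖ ^ 2 :=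
        sq_sum_le_card_mul_sum_sq
    _ = suppCard v * ∑ i, ‖v i‖ ^ 2 := by rw [hsupp (· ^ 2) (by norm_num)]

lemma sum_norm_vecMulVec_star {n : ℕ} (v : Fin n → ℂ) :
    ∑ a, ∑ b, ‖vecMulVec v (star v) a b‖ = (∑ i, ‖v i‖) ^ 2 := by
  simp only [vecMulVec_apply, Pi.star_apply, norm_mul, norm_star, sq, sum_mul_sum]

lemma re_trace_vecMulVec_star {n : ℕ} (v : Fin n → ℂ) :
    (vecMulVec v (star v)).trace.re = ∑ i, ‖v i‖ ^ 2 := by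
  simp only [Matrix.trace, diag_apply, vecMulVec_apply, Pi.star_apply, RCLike.star_def,
    Complex.mul_conj', Complex.re_sum, ← Complex.ofReal_pow, Complex.ofReal_re]

lemma KIncoherent.posSemidef {n k : ℕ} {X : Matrix (Fin n) (Fin n) ℂ} (hX : KIncoherent k X) :
    X.PosSemidef := by
  obtain ⟨m, v, -, rfl⟩ := hX
  exact posSemidef_sum _ fun i _ => posSemidef_vecMulVec_self_star (v i)

lemma KIncoherent.sum_norm_le {n k : ℕ} {X : Matrix (Fin n) (Fin n) ℂ} (hX : KIncoherent k X) :
    ∑ a, ∑ b, ‖X a b‖ ≤ k * X.trace.re := by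
  obtain ⟨m, v, hv, rfl⟩ := hX
  calc ∑ a, ∑ b, ‖(∑ ℓ, vecMulVec (v ℓ) (star (v ℓ))) a b‖
      = ∑ a, ∑ b, ‖∑ ℓ, vecMulVec (v ℓ) (star (v ℓ)) a b‖ := by simp only [Matrix.sum_apply]
    _ ≤ ∑ a, ∑ b, ∑ ℓ, ‖vecMulVec (v ℓ) (star (v ℓ)) a b‖ := by
        gcongr; exact norm_sum_le _ _
    _ = ∑ ℓ, (∑ i, ‖v ℓ i‖) ^ 2 := by
        simp only [← sum_norm_vecMulVec_star]
        exact (sum_congr rfl fun a _ => sum_comm).trans sum_comm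
    _ ≤ ∑ ℓ, (k : ℝ) * ∑ i, ‖v ℓ i‖ ^ 2 := by
        gcongr with ℓ
        exact (sq_sum_norm_le_suppCard_mul (v ℓ)).trans (by gcongr; exact_mod_cast hv ℓ)
    _ = k * (∑ ℓ, vecMulVec (v ℓ) (star (v ℓ))).trace.re := by
        simp only [trace_sum, Complex.re_sum, re_trace_vecMulVec_star, mul_sum]

/-- The matrix `M = [[2,1,1,-1],[1,2,0,1],[1,0,2,-1],[-1,1,-1,2]]` is positive semidefinite,
`3`-incoherent, and not `2`-incoherent: it has factor width exactly `3`. -/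
theorem example_factor_width_three :
    (!![(2 : ℂ), 1, 1, -1; 1, 2, 0, 1; 1, 0, 2, -1; -1, 1, -1, 2]).PosSemidef ∧
    KIncoherent 3 !![(2 : ℂ), 1, 1, -1; 1, 2, 0, 1; 1, 0, 2, -1; -1, 1, -1, 2] ∧
    ¬ KIncoherent 2 !![(2 : ℂ), 1, 1, -1; 1, 2, 0, 1; 1, 0, 2, -1; -1, 1, -1, 2] := by
  have h3 : KIncoherent 3 !![(2 : ℂ), 1, 1, -1; 1, 2, 0, 1; 1, 0, 2, -1; -1, 1, -1, 2] := by
    refine ⟨3, ![![1, 1, 1, 0], ![1, 0, 0, -1], ![0, 1, -1, 1]], ?_, ?_⟩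
    · intro i
      fin_cases i <;> simp [suppCard, Finset.card_filter, Fin.sum_univ_four]
    · ext a b
      rw [Fin.sum_univ_three]
      fin_cases a <;> fin_cases b <;>
        simp only [Matrix.add_apply, vecMulVec_apply] <;> simp <;> norm_num
  refine ⟨h3.posSemidef, h3, fun h2 => ?_⟩
  have h18_le_16 := h2.sum_norm_le
  simp [Fin.sum_univ_four, Matrix.trace] at h18_le_16
  norm_num at h18_le_16
end
end

section
/- The four tetrahedral states ψ_1 = (1,1,1)/√3, ψ_2 = (1,−1,−1)/√3, ψ_3 = (−1,−1,1)/√3, ψ_4 = (−1,1,−1)/√3 in ℂ^3 form an indexed list that is 2-learnable but not 1-learnable; that is, the list has learning width exactly 2. -/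
/-!
Learnability only depends on the states up to nonzero scalars, so one may work with the
unnormalised tetrahedron `t`, which satisfies `∑ tᵢ = 0`, `∑ tᵢ tᵢ* = 4 I` and `⟨tᵢ, tⱼ⟩ = -1`
for `i ≠ j`. For a pair `S = {a, b}` the difference `tₐ - t_b` is orthogonal to the states
outside `S`, and the rank-one operators `(tₐ - t_b)(tₐ - t_b)*` sum over all pairs to `16 I`:
this is a `2`-learning POVM. For `k = 1`, the element `M_{j}` kills the three states `tᵢ`, `i ≠ j`,
hence also `t_j = -∑_{i ≠ j} tᵢ`, hence `M_{j} (∑ tᵢ tᵢ*) = 4 M_{j}`, so every `M_{j}` vanishes,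
contradicting `∑ M = I`.
-/

open Matrix BigOperators Finset ComplexOrder

noncomputable section

lemma kLearnable_smul_iff {n d k : ℕ} {c : ℂ} (hc : c ≠ 0) (ψ : Fin n → Fin d → ℂ) :
    KLearnable k (fun i => c • ψ i) ↔ KLearnable k ψ := by
  have hquad : ∀ (M : Matrix (Fin d) (Fin d) ℂ) (v : Fin d → ℂ),
      star (c • v) ⬝ᵥ (M *ᵥ (c • v)) = (star c * c) * (star v ⬝ᵥ (M *ᵥ v)) := by
    intro M v
    rw [star_smul, mulVec_smul, smul_dotProduct, dotProduct_smul, smul_eq_mul, smul_eq_mul,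
      mul_assoc]
  have hcc : star c * c ≠ 0 := mul_ne_zero (star_ne_zero.mpr hc) hc
  simp only [KLearnable, hquad, mul_eq_zero, hcc, false_or]

theorem sum_subsets_card_two_sum_sum {α β : Type*} [Fintype α] [DecidableEq α]
    [AddCommMonoid β] (f : α → α → β) (hf : ∀ a, f a a = 0) :
    ∑ S : {S : Finset α // S.card = 2}, ∑ a ∈ S.1, ∑ b ∈ S.1, f a b = ∑ a, ∑ b, f a b := by
  have hpair : ∀ a b, f a b = ∑ S : {S : Finset α // S.card = 2},
      if a ∈ S.1 ∧ b ∈ S.1 then f a b else 0 := by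
    intro a b
    rcases eq_or_ne a b with rfl | hab
    · simp [hf]
    rw [Finset.sum_eq_single_of_mem ⟨{a, b}, Finset.card_pair hab⟩ (Finset.mem_univ _)]
    · simp
    rintro ⟨S, hS⟩ - hne
    rw [if_neg]
    rintro ⟨ha, hb⟩
    refine hne (Subtype.ext (Finset.eq_of_subset_of_card_le ?_ ?_)).symm
    · simp [Finset.insert_subset_iff, ha, hb]
    · rw [hS, Finset.card_pair hab]
  calc ∑ S : {S : Finset α // S.card = 2}, ∑ a ∈ S.1, ∑ b ∈ S.1, f a b
      = ∑ S : {S : Finset α // S.card = 2}, ∑ a, ∑ b,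
          if a ∈ S.1 ∧ b ∈ S.1 then f a b else 0 := by
        simp only [ite_and, Finset.sum_ite_irrel, Finset.sum_const_zero, Finset.sum_ite_mem_eq]
    _ = ∑ a, ∑ b, f a b := by
        rw [Finset.sum_comm]
        refine Finset.sum_congr rfl fun a _ => ?_
        rw [Finset.sum_comm]
        exact Finset.sum_congr rfl fun b _ => (hpair a b).symm

section VecMulVec

variable {ι R m : Type*} [CommRing R]

lemma vecMulVec_sum_sum (s : Finset ι) (u v : ι → m → R) :
    vecMulVec (∑ a ∈ s, u a) (∑ b ∈ s, v b) = ∑ a ∈ s, ∑ b ∈ s, vecMulVec (u a) (v b) := by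
  ext i j
  simp only [vecMulVec_apply, Finset.sum_apply, Matrix.sum_apply, Finset.sum_mul, Finset.mul_sum]
  exact Finset.sum_comm

lemma sum_sum_vecMulVec_sub [Fintype ι] (u v : ι → m → R) :
    ∑ a, ∑ b, vecMulVec (u a - u b) (v a - v b) =
      (2 * Fintype.card ι : R) • ∑ a, vecMulVec (u a) (v a) -
        (2 : R) • vecMulVec (∑ a, u a) (∑ a, v a) := by
  simp only [vecMulVec_sub, sub_vecMulVec, Finset.sum_sub_distrib, vecMulVec_sum_sum,
    Finset.sum_const, Finset.card_univ, ← Finset.smul_sum]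
  rw [Finset.sum_comm (f := fun a b => vecMulVec (u b) (v a))]
  module

end VecMulVec

section TightFrame

variable {n d : ℕ} {ψ : Fin n → Fin d → ℂ} {c : ℝ}

theorem kLearnable_two_of_tight_frame (hsum : ∑ i, ψ i = 0) (hc : 0 < c)
    (hframe : ∑ i, vecMulVec (ψ i) (star (ψ i)) = c • 1)
    (hgram : ∀ a b i, i ≠ a → i ≠ b → star (ψ a) ⬝ᵥ ψ i = star (ψ b) ⬝ᵥ ψ i) :
    KLearnable 2 ψ := by
  obtain rfl | hn := eq_or_ne n 0
  · have h10 : (1 : Matrix (Fin d) (Fin d) ℂ) = 0 := by simpa [hc.ne'] using hframe.symm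
    have := subsingleton_of_zero_eq_one h10.symm
    exact ⟨0, fun _ => PosSemidef.zero, Subsingleton.elim _ _, fun _ i => i.elim0⟩
  set P : Fin n → Fin n → Matrix (Fin d) (Fin d) ℂ :=
    fun a b => vecMulVec (ψ a - ψ b) (star (ψ a) - star (ψ b)) with hP
  -- summed over all `S`, the double sums give `∑ a, ∑ b, P a b = 2 n c • 1`
  refine ⟨fun S => (2 * n * c)⁻¹ • ∑ a ∈ S.1, ∑ b ∈ S.1, P a b, fun S => ?_, ?_, fun S i hi => ?_⟩
  · refine PosSemidef.smul (posSemidef_sum _ fun a _ => posSemidef_sum _ fun b _ => ?_)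
      (by positivity)
    simpa only [hP, star_sub] using posSemidef_vecMulVec_self_star (ψ a - ψ b)
  · rw [← Finset.smul_sum, sum_subsets_card_two_sum_sum P (fun a => by simp [hP]), hP,
      sum_sum_vecMulVec_sub, hframe, ← star_sum, hsum, star_zero, vecMulVec_zero, smul_zero,
      sub_zero, Fintype.card_fin]
    ext i j
    rcases eq_or_ne i j with rfl | hij
    · simp only [Matrix.smul_apply, one_apply_eq, Complex.real_smul, smul_eq_mul, mul_one,
        Complex.ofReal_mul, Complex.ofReal_inv, Complex.ofReal_natCast, Complex.ofReal_ofNat]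
      field_simp
    · simp [hij]
  · suffices h : ∀ a ∈ S.1, ∀ b ∈ S.1, P a b *ᵥ ψ i = 0 by
      rw [smul_mulVec, Matrix.sum_mulVec, Finset.sum_eq_zero fun a ha => by
        rw [Matrix.sum_mulVec]; exact Finset.sum_eq_zero (h a ha), smul_zero, dotProduct_zero]
    intro a ha b hb
    rw [hP, vecMulVec_mulVec, sub_dotProduct,
      hgram a b i (ne_of_mem_of_not_mem ha hi).symm (ne_of_mem_of_not_mem hb hi).symm, sub_self,
      MulOpposite.op_zero, zero_smul]

lemma eq_zero_of_mulVec_eq_zero_of_tight_frame (hc : c ≠ 0)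
    (hframe : ∑ i, vecMulVec (ψ i) (star (ψ i)) = c • 1) {A : Matrix (Fin d) (Fin d) ℂ}
    (hA : ∀ i, A *ᵥ ψ i = 0) : A = 0 := by
  have h : A * ∑ i, vecMulVec (ψ i) (star (ψ i)) = 0 := by
    simp only [Finset.mul_sum, mul_vecMulVec, hA, zero_vecMulVec, Finset.sum_const_zero]
  rwa [hframe, mul_smul_comm, mul_one, smul_eq_zero, or_iff_right hc] at h

theorem not_kLearnable_one_of_tight_frame [NeZero d] (hsum : ∑ i, ψ i = 0) (hc : c ≠ 0)
    (hframe : ∑ i, vecMulVec (ψ i) (star (ψ i)) = c • 1) :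
    ¬ KLearnable 1 ψ := by
  rintro ⟨M, hpsd, hM, hzero⟩
  suffices h : ∀ S, M S = 0 by
    simp only [h, Finset.sum_const_zero] at hM
    exact zero_ne_one hM
  rintro ⟨S, hS⟩
  obtain ⟨j, rfl⟩ := Finset.card_eq_one.mp hS
  have hker : ∀ i, i ≠ j → M ⟨{j}, hS⟩ *ᵥ ψ i = 0 := fun i hij =>
    ((hpsd _).dotProduct_mulVec_zero_iff _).mp (hzero _ i (Finset.notMem_singleton.mpr hij))
  refine eq_zero_of_mulVec_eq_zero_of_tight_frame hc hframe fun i => ?_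
  obtain rfl | hij := eq_or_ne i j
  · have htotal : ∑ k, M ⟨{i}, hS⟩ *ᵥ ψ k = 0 := by rw [← mulVec_sum, hsum, mulVec_zero]
    rwa [← Finset.add_sum_erase _ _ (Finset.mem_univ i),
      Finset.sum_eq_zero fun k hk => hker k (Finset.ne_of_mem_erase hk), add_zero] at htotal
  · exact hker i hij

end TightFrame

def tetrahedron : Fin 4 → Fin 3 → ℂ :=
  ![![1, 1, 1], ![1, -1, -1], ![-1, -1, 1], ![-1, 1, -1]]

lemma tetrahedron_sum : ∑ i, tetrahedron i = 0 := by
  ext l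
  fin_cases l <;> simp [tetrahedron, Fin.sum_univ_four]

lemma tetrahedron_tight_frame :
    ∑ i, vecMulVec (tetrahedron i) (star (tetrahedron i)) = (4 : ℝ) • 1 := by
  ext k l
  simp only [Matrix.sum_apply, vecMulVec_apply, Fin.sum_univ_four, Matrix.smul_apply, one_apply,
    Pi.star_apply]
  fin_cases k <;> fin_cases l <;> simp [tetrahedron] <;> norm_num

lemma tetrahedron_inner_of_ne {i j : Fin 4} (hij : i ≠ j) :
    star (tetrahedron i) ⬝ᵥ tetrahedron j = -1 := by
  fin_cases i <;> fin_cases j <;> simp_all [tetrahedron, dotProduct, Fin.sum_univ_three]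

/-- The four tetrahedral states in `ℂ³` are `2`-learnable but not `1`-learnable:
their learning width is exactly `2`. -/
theorem tetrahedral_states_learning_width_two :
    KLearnable 2 (fun i : Fin 4 =>
      ((Real.sqrt 3 : ℂ))⁻¹ •
        ![![(1 : ℂ), 1, 1], ![1, -1, -1], ![-1, -1, 1], ![-1, 1, -1]] i) ∧
    ¬ KLearnable 1 (fun i : Fin 4 =>
      ((Real.sqrt 3 : ℂ))⁻¹ •
        ![![(1 : ℂ), 1, 1], ![1, -1, -1], ![-1, -1, 1], ![-1, 1, -1]] i) := by
  have hc : ((Real.sqrt 3 : ℂ))⁻¹ ≠ 0 :=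
    inv_ne_zero (Complex.ofReal_ne_zero.mpr (Real.sqrt_pos.mpr three_pos).ne')
  rw [kLearnable_smul_iff hc, kLearnable_smul_iff hc]
  have hgram : ∀ a b i, i ≠ a → i ≠ b →
      star (tetrahedron a) ⬝ᵥ tetrahedron i = star (tetrahedron b) ⬝ᵥ tetrahedron i :=
    fun a b i ha hb => by rw [tetrahedron_inner_of_ne ha.symm, tetrahedron_inner_of_ne hb.symm]
  exact ⟨kLearnable_two_of_tight_frame tetrahedron_sum four_pos tetrahedron_tight_frame hgram,
    not_kLearnable_one_of_tight_frame tetrahedron_sum four_ne_zero tetrahedron_tight_frame⟩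
end
end

section
/- The three trine states ψ_1 = (1, 0), ψ_2 = (−1/2, −√3/2), ψ_3 = (−1/2, √3/2) in ℂ^2 form an indexed list that is 2-learnable but not 1-learnable; that is, the list has learning width exactly 2. -/
/-!
Let `wᵢ` be the trine state `ψᵢ` rotated by a right angle. The `wᵢ` form a tight frame,
`∑ wᵢ wᵢᴴ = (3/2) I`, so `Aᵢ = (2/3) wᵢ wᵢᴴ` is a POVM whose outcome `i` never occurs on `ψᵢ`;
reading outcome `i` as the pair of the other two indices makes the trine 2-learnable.
Conversely, in a 1-learning POVM the element `M_{j}` is positive semidefinite with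
`⟨ψᵢ, M_{j} ψᵢ⟩ = 0`, hence `M_{j} ψᵢ = 0`, for both `i ≠ j`. Any two trine states span `ℂ²`,
so every `M_{j}` vanishes and the POVM cannot sum to the identity.
-/

open Matrix BigOperators Finset ComplexOrder

noncomputable section

def Fin.eraseEquiv (n : ℕ) : Fin (n + 1) ≃ {S : Finset (Fin (n + 1)) // S.card = n} :=
  Equiv.ofBijective (fun i => ⟨univ.erase i, by simp⟩) <| by
    refine ⟨fun i j hij => ?_, fun S => ?_⟩
    · exact (erase_inj _ (mem_univ i)).mp (congrArg Subtype.val hij)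
    · obtain ⟨i, hi⟩ := Finset.card_eq_one.mp (by simp [Finset.card_compl, S.2] :
        (S.valᶜ).card = 1)
      exact ⟨i, Subtype.ext <| show univ.erase i = S.val by
        rw [← compl_singleton, ← hi, compl_compl]⟩

lemma Fin.notMem_eraseEquiv_iff {n : ℕ} {i j : Fin (n + 1)} :
    i ∉ (Fin.eraseEquiv n j).val ↔ i = j :=
  show i ∉ univ.erase j ↔ i = j by simp

theorem kLearnable_of_antidistinguishing {n d : ℕ} (ψ : Fin (n + 1) → Fin d → ℂ)
    (A : Fin (n + 1) → Matrix (Fin d) (Fin d) ℂ) (hA : ∀ i, (A i).PosSemidef)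
    (hsum : ∑ i, A i = 1) (hψ : ∀ i, star (ψ i) ⬝ᵥ (A i *ᵥ ψ i) = 0) :
    KLearnable n ψ := by
  refine ⟨fun S => A ((Fin.eraseEquiv n).symm S), fun S => hA _, ?_, fun S i hi => ?_⟩
  · rwa [Equiv.sum_comp]
  · obtain ⟨j, rfl⟩ := (Fin.eraseEquiv n).surjective S
    rw [Fin.notMem_eraseEquiv_iff.mp hi]
    simpa only [Equiv.symm_apply_apply] using hψ j

theorem not_kLearnable_of_span_eq_top {n d k : ℕ} [NeZero d] (ψ : Fin n → Fin d → ℂ)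
    (hspan : ∀ S : {S : Finset (Fin n) // S.card = k},
      Submodule.span ℂ (ψ '' (↑S.val)ᶜ) = ⊤) :
    ¬ KLearnable k ψ := by
  rintro ⟨M, hM, hsum, hψ⟩
  have hzero : ∀ S, M S = 0 := fun S => Matrix.toLin'.injective <|
    LinearMap.ext_on (hspan S) <| by
      rintro _ ⟨i, hi, rfl⟩
      simpa using ((hM S).dotProduct_mulVec_zero_iff _).mp (hψ S i hi)
  simp [hzero] at hsum

lemma span_pair_eq_top_of_det_ne_zero {K : Type*} [Field K] {u v : Fin 2 → K}
    (h : u 0 * v 1 - u 1 * v 0 ≠ 0) : Submodule.span K {u, v} = ⊤ := by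
  have hind : LinearIndependent K ![u, v] :=
    Matrix.linearIndependent_rows_iff_isUnit (A := Matrix.of ![u, v]).mpr <|
      (Matrix.isUnit_iff_isUnit_det _).mpr <| by simpa [Matrix.det_fin_two] using h
  rw [← Matrix.range_cons_cons_empty u v ![]]
  exact hind.span_eq_top_of_card_eq_finrank (by simp)

def trine : Fin 3 → Fin 2 → ℂ :=
  ![![(1 : ℂ), 0],
    ![-(1 / 2 : ℂ), -((Real.sqrt 3 : ℂ) / 2)],
    ![-(1 / 2 : ℂ), (Real.sqrt 3 : ℂ) / 2]]

lemma star_trine (i : Fin 3) : star (trine i) = trine i := by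
  ext a
  fin_cases i <;> fin_cases a <;> simp [trine, Complex.conj_ofReal]

lemma span_trine_pair {i j : Fin 3} (hij : i ≠ j) :
    Submodule.span ℂ {trine i, trine j} = ⊤ := by
  have h3 : ((Real.sqrt 3 : ℝ) : ℂ) ≠ 0 := by simp
  refine span_pair_eq_top_of_det_ne_zero ?_
  fin_cases i <;> fin_cases j <;> simp_all [trine] <;> ring_nf <;> simp_all

lemma span_trine_compl_eq_top (S : {S : Finset (Fin 3) // S.card = 1}) :
    Submodule.span ℂ (trine '' (↑S.val)ᶜ) = ⊤ := by
  obtain ⟨i, j, hij, hc⟩ := card_eq_two.mp (by simp [card_compl, S.2] : (S.valᶜ).card = 2)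
  refine eq_top_mono (Submodule.span_mono ?_) (span_trine_pair hij)
  rw [← coe_compl, hc]
  exact Set.insert_subset_iff.mpr ⟨Set.mem_image_of_mem _ (by simp),
    Set.singleton_subset_iff.mpr (Set.mem_image_of_mem _ (by simp))⟩

def trinePerp (i : Fin 3) : Fin 2 → ℂ := ![-trine i 1, trine i 0]

lemma star_trine_dotProduct_trinePerp (i : Fin 3) : star (trine i) ⬝ᵥ trinePerp i = 0 := by
  rw [star_trine]
  simp only [trinePerp, dotProduct, Fin.sum_univ_two, cons_val_zero, cons_val_one]
  ring

lemma star_trinePerp (i : Fin 3) : star (trinePerp i) = trinePerp i := by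
  have h a : star (trine i a) = trine i a := congrFun (star_trine i) a
  ext a
  fin_cases a <;> simp [trinePerp, h]

lemma sum_vecMulVec_trinePerp :
    ∑ i, vecMulVec (trinePerp i) (star (trinePerp i)) = (3 / 2 : ℂ) • 1 := by
  have h3 : ((Real.sqrt 3 : ℝ) : ℂ) ^ 2 = 3 := by
    rw [← Complex.ofReal_pow, Real.sq_sqrt (by norm_num)]; norm_num
  ext a b
  simp only [star_trinePerp, Matrix.sum_apply, Fin.sum_univ_three, vecMulVec_apply]
  fin_cases a <;> fin_cases b <;> simp [trinePerp, trine] <;> ring_nf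
  norm_num [h3]

def trinePOVM (i : Fin 3) : Matrix (Fin 2) (Fin 2) ℂ :=
  (2 / 3 : ℂ) • vecMulVec (trinePerp i) (star (trinePerp i))

lemma trinePOVM_posSemidef (i : Fin 3) : (trinePOVM i).PosSemidef :=
  (posSemidef_vecMulVec_self_star _).smul (by positivity)

lemma sum_trinePOVM : ∑ i, trinePOVM i = 1 := by
  simp only [trinePOVM]
  rw [← Finset.smul_sum, sum_vecMulVec_trinePerp, smul_smul]
  norm_num

lemma trine_dotProduct_trinePOVM_mulVec (i : Fin 3) :
    star (trine i) ⬝ᵥ (trinePOVM i *ᵥ trine i) = 0 := by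
  rw [trinePOVM, smul_mulVec, vecMulVec_mulVec, dotProduct_smul, dotProduct_smul,
    star_trine_dotProduct_trinePerp]
  simp

/-- The three trine states in `ℂ²` are `2`-learnable but not `1`-learnable:
their learning width is exactly `2`. -/
theorem trine_states_learning_width_two :
    KLearnable 2 (![![(1 : ℂ), 0],
      ![-(1 / 2 : ℂ), -((Real.sqrt 3 : ℂ) / 2)],
      ![-(1 / 2 : ℂ), (Real.sqrt 3 : ℂ) / 2]]) ∧
    ¬ KLearnable 1 (![![(1 : ℂ), 0],
      ![-(1 / 2 : ℂ), -((Real.sqrt 3 : ℂ) / 2)],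
      ![-(1 / 2 : ℂ), (Real.sqrt 3 : ℂ) / 2]]) :=
  ⟨kLearnable_of_antidistinguishing trine trinePOVM trinePOVM_posSemidef sum_trinePOVM
      trine_dotProduct_trinePOVM_mulVec,
    not_kLearnable_of_span_eq_top trine span_trine_compl_eq_top⟩

end
end
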